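/- arXiv:2202.01879 — 5 statements merged into one kernel-verified Lean document; each statement's English description precedes it below -/
import Mathlib

section
/- Let d ≥ 2 be an integer, let P be a d×d positive definite real matrix, let g ∈ ℝ^d be nonzero, and let α ∈ (−1, 1). With g̃ = g/√(gᵀPg) and P' = (d²(1−α²)/(d²−1))(P − (2(1+dα)/((d+1)(1+α))) P g̃ g̃ᵀ P), the determinant ratio satisfies det P'/det P = (d(1+α)/(d−1))^{d−1} · (d(1−α)/(d+1))^{d+1}; equivalently the volume ratio of the corresponding ellipsoids is Vol(E(x',P'))/Vol(E(x,P)) = (d(1+α)/(d−1))^{(d−1)/2} · (d(1−α)/(d+1))^{(d+1)/2}. -/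
/-!
Write `P' = c • (P - β • P g̃ g̃ᵀ P)`. Factoring `P` out on the left leaves `1 - β • g̃ (g̃ᵀ P)`,
a rank-one perturbation of the identity, so the matrix determinant lemma and `g̃ᵀ P g̃ = 1`
give `det P' / det P = cᵈ (1 - β)`. With `A = d(1+α)/(d-1)` and `B = d(1-α)/(d+1)` one has
`c = A B` and `1 - β = B / A`, whence the ratio `A^(d-1) B^(d+1)`; the volume ratio is its
square root.
-/

open Matrix

theorem Matrix.det_sub_smul_mul_vecMulVec_mul {n R : Type*} [Fintype n] [DecidableEq n]
    [CommRing R] (P : Matrix n n R) (β : R) (u v : n → R) :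
    (P - β • (P * vecMulVec u v * P)).det = P.det * (1 - β * (v ⬝ᵥ P *ᵥ u)) := by
  have hfactor : P - β • (P * vecMulVec u v * P)
      = P * (1 - replicateCol Unit (β • u) * replicateRow Unit (v ᵥ* P)) := by
    rw [← vecMulVec_eq, smul_vecMulVec, ← vecMulVec_mul, Matrix.mul_sub, Matrix.mul_one,
      Matrix.mul_smul, Matrix.mul_assoc]
  rw [hfactor, det_mul, det_one_sub_mul_comm,
    det_unique (1 - replicateRow Unit (v ᵥ* P) * replicateCol Unit (β • u)), Matrix.sub_apply, Matrix.one_apply_eq,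
    replicateRow_mul_replicateCol_apply, dotProduct_smul, smul_eq_mul, ← dotProduct_mulVec,
    mul_comm β]

theorem Matrix.dotProduct_mulVec_inv_sqrt_smul_self {n : Type*} [Fintype n]
    (P : Matrix n n ℝ) {g : n → ℝ} (hg : 0 < g ⬝ᵥ P *ᵥ g) :
    ((√(g ⬝ᵥ P *ᵥ g))⁻¹ • g) ⬝ᵥ P *ᵥ ((√(g ⬝ᵥ P *ᵥ g))⁻¹ • g) = 1 := by
  rw [smul_dotProduct, mulVec_smul, dotProduct_smul, smul_eq_mul, smul_eq_mul, ← mul_assoc,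
    ← mul_inv, Real.mul_self_sqrt hg.le, inv_mul_cancel₀ hg.ne']

theorem Real.sqrt_pow_eq_rpow_div_two {x : ℝ} (hx : 0 ≤ x) (n : ℕ) :
    √(x ^ n) = x ^ ((n : ℝ) / 2) := by
  rw [Real.sqrt_eq_rpow, ← Real.rpow_natCast, ← Real.rpow_mul hx, mul_one_div]

theorem shallowCut_scale_pow_mul {d : ℕ} (hd : 1 < d) {α : ℝ} (hα : 1 + α ≠ 0) :
    ((d : ℝ) ^ 2 * (1 - α ^ 2) / ((d : ℝ) ^ 2 - 1)) ^ d
        * (1 - 2 * (1 + (d : ℝ) * α) / (((d : ℝ) + 1) * (1 + α)))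
      = ((d : ℝ) * (1 + α) / ((d : ℝ) - 1)) ^ (d - 1)
        * ((d : ℝ) * (1 - α) / ((d : ℝ) + 1)) ^ (d + 1) := by
  set A := (d : ℝ) * (1 + α) / ((d : ℝ) - 1)
  set B := (d : ℝ) * (1 - α) / ((d : ℝ) + 1)
  have hd₁ : (d : ℝ) - 1 ≠ 0 := sub_ne_zero.2 (by exact_mod_cast hd.ne')
  have hd₂ : (d : ℝ) + 1 ≠ 0 := by positivity
  have hA : A ≠ 0 := div_ne_zero (mul_ne_zero (by positivity) hα) hd₁
  have hscale : (d : ℝ) ^ 2 * (1 - α ^ 2) / ((d : ℝ) ^ 2 - 1) = A * B := by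
    have hd₃ : (d : ℝ) ^ 2 - 1 ≠ 0 := by
      rw [show (d : ℝ) ^ 2 - 1 = ((d : ℝ) - 1) * ((d : ℝ) + 1) by ring]
      exact mul_ne_zero hd₁ hd₂
    simp only [A, B]
    field_simp
    ring
  have hshrink : 1 - 2 * (1 + (d : ℝ) * α) / (((d : ℝ) + 1) * (1 + α)) = B / A := by
    simp only [A, B]
    field_simp
    ring
  obtain ⟨e, rfl⟩ : ∃ e, d = e + 1 := ⟨d - 1, by omega⟩
  rw [hscale, hshrink, Nat.add_sub_cancel, mul_pow, pow_succ A, pow_succ B, pow_succ B]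
  field_simp
  ring

/-- Determinant/volume ratio of the shallow-cut ellipsoid update. -/
theorem stmt0 (d : ℕ) (hd : 2 ≤ d)
    (P : Matrix (Fin d) (Fin d) ℝ) (hP : P.PosDef)
    (g : Fin d → ℝ) (hg : g ≠ 0)
    (α : ℝ) (hα₁ : -1 < α) (hα₂ : α < 1)
    (gt : Fin d → ℝ) (hgt : gt = (Real.sqrt (g ⬝ᵥ (P *ᵥ g)))⁻¹ • g)
    (P' : Matrix (Fin d) (Fin d) ℝ)
    (hP' : P' = ((d : ℝ)^2 * (1 - α^2) / ((d : ℝ)^2 - 1)) •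
      (P - (2 * (1 + (d : ℝ) * α) / (((d : ℝ) + 1) * (1 + α))) •
        (P * vecMulVec gt gt * P))) :
    P'.det / P.det
      = ((d : ℝ) * (1 + α) / ((d : ℝ) - 1)) ^ (d - 1)
        * ((d : ℝ) * (1 - α) / ((d : ℝ) + 1)) ^ (d + 1) ∧
    Real.sqrt P'.det / Real.sqrt P.det
      = ((d : ℝ) * (1 + α) / ((d : ℝ) - 1)) ^ (((d : ℝ) - 1) / 2)
        * ((d : ℝ) * (1 - α) / ((d : ℝ) + 1)) ^ (((d : ℝ) + 1) / 2) := by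
  have hq : 0 < g ⬝ᵥ P *ᵥ g := by simpa using hP.dotProduct_mulVec_pos hg
  have hunit : gt ⬝ᵥ P *ᵥ gt = 1 := hgt ▸ P.dotProduct_mulVec_inv_sqrt_smul_self hq
  have hratio : P'.det / P.det = ((d : ℝ) * (1 + α) / ((d : ℝ) - 1)) ^ (d - 1)
      * ((d : ℝ) * (1 - α) / ((d : ℝ) + 1)) ^ (d + 1) := by
    rw [hP', det_smul, Fintype.card_fin, det_sub_smul_mul_vecMulVec_mul, hunit, mul_one,
      ← shallowCut_scale_pow_mul hd (by linarith)]
    field_simp [hP.det_pos.ne']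
  refine ⟨hratio, ?_⟩
  have hdR : (1 : ℝ) ≤ d := by exact_mod_cast (by omega : 1 ≤ d)
  have hA : 0 ≤ (d : ℝ) * (1 + α) / ((d : ℝ) - 1) := by
    apply div_nonneg <;> nlinarith
  have hB : 0 ≤ (d : ℝ) * (1 - α) / ((d : ℝ) + 1) := by
    apply div_nonneg <;> nlinarith
  rw [← Real.sqrt_div' _ hP.det_pos.le, hratio, Real.sqrt_mul (pow_nonneg hA _),
    Real.sqrt_pow_eq_rpow_div_two hA, Real.sqrt_pow_eq_rpow_div_two hB,
    Nat.cast_sub (by omega), Nat.cast_add, Nat.cast_one]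
end

section
/- Let d ≥ 2 be an integer and let α be a real number with −1/d < α < 1. Then (d(1+α)/(d−1))^{(d−1)/2} · (d(1−α)/(d+1))^{(d+1)/2} ≤ exp(−(1+dα)²/(2d)). -/
/-- Key logarithmic inequality: for `D ≥ 2` and `0 < t < D + 1`,
`((D-1)/2) log((D-1+t)/(D-1)) + ((D+1)/2) log((D+1-t)/(D+1)) ≤ -t²/(2D)`. -/
lemma key_log_ineq (D : ℝ) (hD : 2 ≤ D) (t : ℝ) (ht0 : 0 < t) (ht1 : t < D + 1) :
    ((D - 1) / 2) * Real.log ((D - 1 + t) / (D - 1))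
      + ((D + 1) / 2) * Real.log ((D + 1 - t) / (D + 1)) ≤ -t ^ 2 / (2 * D) := by
  set g : ℝ → ℝ := fun x => ((D - 1) / 2) * Real.log (D - 1 + x)
      + ((D + 1) / 2) * Real.log (D + 1 - x) + x ^ 2 / (2 * D) with hg
  have hD0 : (0:ℝ) < D := by linarith
  have hder : ∀ x ∈ Set.Icc (0:ℝ) t,
      HasDerivAt g (((D - 1) / 2) * (1 / (D - 1 + x))
        + ((D + 1) / 2) * (-1 / (D + 1 - x)) + (2 : ℕ) * x ^ 1 / (2 * D)) x := by
    intro x hx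
    have hx1 : 0 < D - 1 + x := by have := hx.1; linarith
    have hx2 : 0 < D + 1 - x := by have := hx.2; linarith
    have h1 : HasDerivAt (fun y => Real.log (D - 1 + y)) (1 / (D - 1 + x)) x := by
      have := (((hasDerivAt_id x).const_add (D - 1)).log hx1.ne')
      simpa using this
    have h2 : HasDerivAt (fun y => Real.log (D + 1 - y)) (-1 / (D + 1 - x)) x := by
      have := (((hasDerivAt_id x).const_sub (D + 1)).log hx2.ne')
      simpa using this
    exact ((h1.const_mul ((D - 1) / 2)).add (h2.const_mul ((D + 1) / 2))).add
      ((hasDerivAt_pow 2 x).div_const (2 * D))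
  have hanti : AntitoneOn g (Set.Icc 0 t) := by
    apply antitoneOn_of_deriv_nonpos (convex_Icc 0 t)
    · exact fun x hx => ((hder x hx).differentiableAt).continuousAt.continuousWithinAt
    · intro x hx
      rw [interior_Icc] at hx
      exact ((hder x (Set.Ioo_subset_Icc_self hx)).differentiableAt).differentiableWithinAt
    · intro x hx
      rw [interior_Icc] at hx
      rw [(hder x (Set.Ioo_subset_Icc_self hx)).deriv]
      have hx0 : 0 < x := hx.1
      have hxt : x < t := hx.2
      have hx1 : 0 < D - 1 + x := by linarith
      have hx2 : 0 < D + 1 - x := by linarith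
      have hid : ((D - 1) / 2) * (1 / (D - 1 + x)) + ((D + 1) / 2) * (-1 / (D + 1 - x))
          + (2 : ℕ) * x ^ 1 / (2 * D)
          = -(x * (x - 1) ^ 2) / (D * (D - 1 + x) * (D + 1 - x)) := by
        field_simp
        ring
      rw [hid]
      apply div_nonpos_of_nonpos_of_nonneg
      · nlinarith [sq_nonneg (x - 1)]
      · positivity
  have hmem0 : (0:ℝ) ∈ Set.Icc (0:ℝ) t := ⟨le_rfl, ht0.le⟩
  have hmemt : t ∈ Set.Icc (0:ℝ) t := ⟨ht0.le, le_rfl⟩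
  have hgt : g t ≤ g 0 := hanti hmem0 hmemt ht0.le
  have h1 : 0 < D - 1 + t := by linarith
  have h2 : 0 < D + 1 - t := by linarith
  have h3 : 0 < D - 1 := by linarith
  have h4 : 0 < D + 1 := by linarith
  rw [Real.log_div h1.ne' h3.ne', Real.log_div h2.ne' h4.ne']
  simp only [hg] at hgt
  norm_num at hgt
  ring_nf at hgt ⊢
  linarith [hgt]

/-- Volume shrinkage bound for a cut of depth `α ∈ (-1/d, 1)`. -/
theorem stmt1 (d : ℕ) (hd : 2 ≤ d) (α : ℝ)
    (hα₁ : -(1 / (d : ℝ)) < α) (hα₂ : α < 1) :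
    ((d : ℝ) * (1 + α) / ((d : ℝ) - 1)) ^ (((d : ℝ) - 1) / 2)
      * ((d : ℝ) * (1 - α) / ((d : ℝ) + 1)) ^ (((d : ℝ) + 1) / 2)
      ≤ Real.exp (-(1 + (d : ℝ) * α) ^ 2 / (2 * (d : ℝ))) := by
  have hD : (2:ℝ) ≤ (d:ℝ) := by exact_mod_cast hd
  set D : ℝ := (d : ℝ) with hDdef
  set t : ℝ := 1 + D * α with htdef
  have hD0 : (0:ℝ) < D := by linarith
  have ht0 : 0 < t := by
    have : -(1:ℝ) < D * α := by
      have := mul_lt_mul_of_pos_left hα₁ hD0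
      rw [mul_neg, mul_one_div, div_self hD0.ne'] at this
      linarith
    simp only [htdef]; linarith
  have ht1 : t < D + 1 := by
    have : D * α < D := by nlinarith
    simp only [htdef]; linarith
  have ha : (0:ℝ) < D * (1 + α) / (D - 1) := by
    have h1 : 0 < D - 1 := by linarith
    have h2 : 0 < D * (1 + α) := by nlinarith
    positivity
  have hb : (0:ℝ) < D * (1 - α) / (D + 1) := by
    have h1 : 0 < D + 1 := by linarith
    have h2 : 0 < D * (1 - α) := by nlinarith
    positivity
  rw [Real.rpow_def_of_pos ha, Real.rpow_def_of_pos hb, ← Real.exp_add, Real.exp_le_exp]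
  have hkey := key_log_ineq D hD t ht0 ht1
  have ea : D * (1 + α) / (D - 1) = (D - 1 + t) / (D - 1) := by
    simp only [htdef]; ring_nf
  have eb : D * (1 - α) / (D + 1) = (D + 1 - t) / (D + 1) := by
    simp only [htdef]; ring_nf
  rw [ea, eb]
  have et : -(1 + D * α) ^ 2 / (2 * D) = -t ^ 2 / (2 * D) := by
    simp only [htdef]
  rw [et]
  linarith [hkey]
end

section
/- Let d ≥ 2, let k > 1, and let α be a real number with −1/(kd) ≤ α ≤ 0. Then (1+dα)²/(2d) ≥ (k−1)²/(2k²d), and consequently the ellipsoid volume ratio after a cut of depth α satisfies (d(1+α)/(d−1))^{(d−1)/2} · (d(1−α)/(d+1))^{(d+1)/2} ≤ exp(−(k−1)²/(2k²d)). -/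
/-!
Put `β = 1 + dα`, so that the bases of the volume ratio become `1 + β/(d-1)` and `1 - β/(d+1)`
and the cut depth bounds give `(k-1)/k ≤ β ≤ 1`. The first claim is then just `β² ≥ ((k-1)/k)²`.
For the second, the logarithm of the volume ratio plus `β²/(2d)` is a function of `β` that vanishes
at `0` and has derivative `-β(1-β)²/(d(d-1+β)(d+1-β)) ≤ 0`, so the ratio is at most `exp(-β²/(2d))`.
-/

open Real Set

/-- `log` of the volume ratio at `β = y`, plus `y²/(2d)`. -/
noncomputable def cutLogGap (d y : ℝ) : ℝ :=
  (d - 1) / 2 * log (1 + y / (d - 1)) + (d + 1) / 2 * log (1 - y / (d + 1)) + y ^ 2 / (2 * d)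

section CutLogGap

variable {d : ℝ}

theorem cutLogGap_zero (d : ℝ) : cutLogGap d 0 = 0 := by
  simp [cutLogGap]

theorem hasDerivAt_cutLogGap (hd : 1 < d) {y : ℝ} (hy₀ : -(d - 1) < y) (hy₁ : y < d + 1) :
    HasDerivAt (cutLogGap d) (-(y * (1 - y) ^ 2) / (d * ((d - 1 + y) * (d + 1 - y)))) y := by
  have hd_sub : 0 < d - 1 := by linarith
  have hd_add : 0 < d + 1 := by linarith
  have hpos_sub : 0 < 1 + y / (d - 1) := by
    have : -1 < y / (d - 1) := by rw [lt_div_iff₀ hd_sub]; linarith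
    linarith
  have hpos_add : 0 < 1 - y / (d + 1) := sub_pos.2 ((div_lt_one hd_add).2 hy₁)
  have h_sub : HasDerivAt (fun y => 1 + y / (d - 1)) (1 / (d - 1)) y := by
    simpa using ((hasDerivAt_id y).div_const (d - 1)).const_add 1
  have h_add : HasDerivAt (fun y => 1 - y / (d + 1)) (-(1 / (d + 1))) y := by
    simpa using ((hasDerivAt_id y).div_const (d + 1)).const_sub 1
  have : d - 1 + y ≠ 0 := by linarith
  have : d + 1 - y ≠ 0 := by linarith
  refine ((((h_sub.log hpos_sub.ne').const_mul ((d - 1) / 2)).add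
    ((h_add.log hpos_add.ne').const_mul ((d + 1) / 2))).add
    ((hasDerivAt_pow 2 y).div_const (2 * d))).congr_deriv ?_
  field_simp
  ring

theorem antitoneOn_cutLogGap (hd : 1 < d) : AntitoneOn (cutLogGap d) (Ico 0 (d + 1)) := by
  have hderiv : ∀ y ∈ Ico 0 (d + 1), HasDerivAt (cutLogGap d)
      (-(y * (1 - y) ^ 2) / (d * ((d - 1 + y) * (d + 1 - y)))) y :=
    fun y hy => hasDerivAt_cutLogGap hd (by linarith [hy.1]) hy.2
  refine antitoneOn_of_hasDerivWithinAt_nonpos (convex_Ico 0 (d + 1))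
    (fun y hy => (hderiv y hy).continuousAt.continuousWithinAt)
    (fun y hy => (hderiv y (Ioo_subset_Ico_self (by simpa using hy))).hasDerivWithinAt)
    (fun y hy => ?_)
  rw [interior_Ico] at hy
  have : 0 < d - 1 + y := by linarith [hy.1]
  have : 0 < d + 1 - y := by linarith [hy.2]
  exact div_nonpos_of_nonpos_of_nonneg (neg_nonpos.2 (by have := hy.1.le; positivity))
    (by positivity)

theorem cutLogGap_nonpos (hd : 1 < d) {y : ℝ} (hy₀ : 0 ≤ y) (hy₁ : y < d + 1) :
    cutLogGap d y ≤ 0 := by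
  have hd₀ : (0 : ℝ) ∈ Ico 0 (d + 1) := ⟨le_rfl, by linarith⟩
  simpa [cutLogGap_zero] using antitoneOn_cutLogGap hd hd₀ ⟨hy₀, hy₁⟩ hy₀

theorem volumeRatio_le_exp (hd : 1 < d) {y : ℝ} (hy₀ : 0 ≤ y) (hy₁ : y < d + 1) :
    (1 + y / (d - 1)) ^ ((d - 1) / 2) * (1 - y / (d + 1)) ^ ((d + 1) / 2)
      ≤ exp (-(y ^ 2 / (2 * d))) := by
  have hd_add : 0 < d + 1 := by linarith
  have hpos_sub : 0 < 1 + y / (d - 1) := by positivity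
  have hpos_add : 0 < 1 - y / (d + 1) := sub_pos.2 ((div_lt_one hd_add).2 hy₁)
  rw [← log_le_iff_le_exp (by positivity), log_mul (by positivity) (by positivity),
    log_rpow hpos_sub, log_rpow hpos_add]
  have := cutLogGap_nonpos hd hy₀ hy₁
  rw [cutLogGap] at this
  linarith

end CutLogGap

theorem sub_one_div_le_one_add_mul {k d α : ℝ} (hk : 0 < k) (hd : 0 < d)
    (hα : -(1 / (k * d)) ≤ α) : (k - 1) / k ≤ 1 + d * α := by
  have : d * (-(1 / (k * d))) = -(1 / k) := by field_simp
  have := mul_le_mul_of_nonneg_left hα hd.le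
  rw [sub_div, div_self hk.ne']
  linarith

/-- Volume shrinkage after a shallow cut of depth `α ∈ [-1/(kd), 0]`. -/
theorem stmt2 (d : ℕ) (hd : 2 ≤ d) (k : ℝ) (hk : 1 < k) (α : ℝ)
    (hα₁ : -(1 / (k * (d : ℝ))) ≤ α) (hα₂ : α ≤ 0) :
    (1 + (d : ℝ) * α) ^ 2 / (2 * (d : ℝ)) ≥ (k - 1) ^ 2 / (2 * k ^ 2 * (d : ℝ)) ∧
    ((d : ℝ) * (1 + α) / ((d : ℝ) - 1)) ^ (((d : ℝ) - 1) / 2)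
      * ((d : ℝ) * (1 - α) / ((d : ℝ) + 1)) ^ (((d : ℝ) + 1) / 2)
      ≤ Real.exp (-((k - 1) ^ 2 / (2 * k ^ 2 * (d : ℝ)))) := by
  have hd₁ : (1 : ℝ) < d := by exact_mod_cast hd
  have hd₀ : (0 : ℝ) < d := by linarith
  have hβ₀ := sub_one_div_le_one_add_mul (by linarith) hd₀ hα₁
  have hβ₁ : 1 + d * α ≤ 1 := by nlinarith
  have hk₀ : 0 ≤ (k - 1) / k := div_nonneg (by linarith) (by linarith)
  have hsq : (k - 1) ^ 2 / (2 * k ^ 2 * d) ≤ (1 + d * α) ^ 2 / (2 * d) := by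
    rw [mul_comm 2, mul_assoc, ← div_div, ← div_pow]
    gcongr
  refine ⟨hsq, ?_⟩
  have hbase_sub : d * (1 + α) / (d - 1) = 1 + (1 + d * α) / (d - 1) := by
    have : (d : ℝ) - 1 ≠ 0 := by linarith
    field_simp; ring
  have hbase_add : d * (1 - α) / (d + 1) = 1 - (1 + d * α) / (d + 1) := by
    have : (d : ℝ) + 1 ≠ 0 := by linarith
    field_simp; ring
  rw [hbase_sub, hbase_add]
  exact (volumeRatio_le_exp hd₁ (hk₀.trans hβ₀) (by linarith)).trans
    (exp_le_exp.2 (neg_le_neg hsq))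
end

section
/- Let d ≥ 2, let P be a d×d symmetric positive definite matrix with eigenvalues σ_1 ≥ ⋯ ≥ σ_d > 0 and orthonormal eigenvectors u_1,…,u_d, let g be a nonzero vector in span{u_1, u_2}, g̃ = g/√(gᵀPg), and P' = (d²/(d²−1))(P − (2/(d+1)) P g̃ g̃ᵀ P). Let σ'_1 ≥ σ'_2 be the two eigenvalues of P' other than {(d²/(d²−1))σ_i : 3 ≤ i ≤ d}. Then (σ'_1 σ'_2)/(σ_1 σ_2) = d⁴/((d+1)³(d−1)) < 1, and moreover (d²/(d+1)²) σ_1 ≤ σ'_1 ≤ (d²/(d²−1)) σ_1 and (d²/(d+1)²) σ_2 ≤ σ'_2 ≤ (d²/(d²−1)) σ_2. -/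
/-!
Restricted to the plane `span{u₁, u₂}`, which contains `g` and is invariant under `P`, the
update acts as the same rank-one update `M = c (S - β S h hᵀ S)` of `S = diag(σ₁, σ₂)`, where
`c = d²/(d²-1)`, `β = 2/(d+1)` and `hᵀ S h = 1`; so `σ'₁, σ'₂` are the eigenvalues of the
symmetric `2 × 2` matrix `M`. Their product is `det M = c² (1 - β) σ₁ σ₂`. By Cauchy–Schwarz for
the form `S`, `c (1 - β) S ≤ M ≤ c S` as quadratic forms, so every eigenvalue of `M` lies in
`[c (1 - β) σ₂, c σ₁]`. The two remaining bounds come from the diagonal entries, which lie between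
the two eigenvalues: `σ'₁ ≥ M₁₁ ≥ c (1 - β) σ₁` and `σ'₂ ≤ M₂₂ ≤ c σ₂`.
-/

open Matrix

variable {n m : Type*} [Fintype n] [Fintype m]

def ellipsoidUpdate (c β : ℝ) (P : Matrix n n ℝ) (g : n → ℝ) : Matrix n n ℝ :=
  c • (P - β • (P * vecMulVec g g * P))

lemma ellipsoidUpdate_diagonal_apply [DecidableEq n] (c β : ℝ) (s h : n → ℝ) (i j : n) :
    ellipsoidUpdate c β (diagonal s) h i j
      = c * (diagonal s i j - β * (s i * h i) * (s j * h j)) := by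
  simp only [ellipsoidUpdate, Matrix.smul_apply, Matrix.sub_apply, diagonal_mul, mul_diagonal,
    vecMulVec_apply, smul_eq_mul]
  ring

lemma transpose_ellipsoidUpdate {P : Matrix n n ℝ} (hP : Pᵀ = P) (c β : ℝ) (g : n → ℝ) :
    (ellipsoidUpdate c β P g)ᵀ = ellipsoidUpdate c β P g := by
  simp [ellipsoidUpdate, transpose_mul, transpose_vecMulVec, hP, Matrix.mul_assoc]

lemma normalize_dotProduct_mulVec {P : Matrix n n ℝ} {g : n → ℝ} (hg : 0 < g ⬝ᵥ (P *ᵥ g)) :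
    ((√(g ⬝ᵥ (P *ᵥ g)))⁻¹ • g) ⬝ᵥ (P *ᵥ ((√(g ⬝ᵥ (P *ᵥ g)))⁻¹ • g)) = 1 := by
  rw [mulVec_smul, dotProduct_smul, smul_dotProduct, smul_eq_mul, smul_eq_mul, ← mul_assoc,
    ← mul_inv, Real.mul_self_sqrt hg.le, inv_mul_cancel₀ hg.ne']

lemma mulVec_eq_smul_of_orthonormal {ι : Type*} [Fintype ι] [DecidableEq ι] {u : ι → n → ℝ}
    (horth : ∀ i j, u i ⬝ᵥ u j = if i = j then 1 else 0) (σ : ι → ℝ) (j : ι) :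
    (∑ i, σ i • vecMulVec (u i) (u i)) *ᵥ u j = σ j • u j := by
  simp [sum_mulVec, smul_mulVec, vecMulVec_mulVec, horth]

lemma dotProduct_self_pos {w : n → ℝ} (hw : w ≠ 0) : 0 < w ⬝ᵥ w :=
  (dotProduct_self_star_nonneg w).lt_of_ne' (dotProduct_self_eq_zero.not.mpr hw)

lemma eigenvalue_le_of_dotProduct_mulVec_le {M : Matrix n n ℝ} {w : n → ℝ} {p C : ℝ}
    (h : M *ᵥ w = p • w) (hw : w ≠ 0) (hC : w ⬝ᵥ (M *ᵥ w) ≤ C * (w ⬝ᵥ w)) : p ≤ C := by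
  rw [h, dotProduct_smul, smul_eq_mul] at hC
  exact le_of_mul_le_mul_right hC (dotProduct_self_pos hw)

lemma le_eigenvalue_of_le_dotProduct_mulVec {M : Matrix n n ℝ} {w : n → ℝ} {p C : ℝ}
    (h : M *ᵥ w = p • w) (hw : w ≠ 0) (hC : C * (w ⬝ᵥ w) ≤ w ⬝ᵥ (M *ᵥ w)) : C ≤ p := by
  rw [h, dotProduct_smul, smul_eq_mul] at hC
  exact le_of_mul_le_mul_right hC (dotProduct_self_pos hw)

lemma mul_transpose_of_eigenvectors {M : Matrix n n ℝ} {w₁ w₂ : n → ℝ} {p₁ p₂ : ℝ}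
    (h₁ : M *ᵥ w₁ = p₁ • w₁) (h₂ : M *ᵥ w₂ = p₂ • w₂) :
    M * (of ![w₁, w₂])ᵀ = (of ![w₁, w₂])ᵀ * diagonal ![p₁, p₂] := by
  ext i k
  change (M *ᵥ ![w₁, w₂] k) i = _
  fin_cases k <;> simp [h₁, h₂, mul_comm]

lemma transpose_mul_self_of_orthonormal {e₀ e₁ : n → ℝ} (h₀₀ : e₀ ⬝ᵥ e₀ = 1)
    (h₀₁ : e₀ ⬝ᵥ e₁ = 0) (h₁₁ : e₁ ⬝ᵥ e₁ = 1) : (of ![e₀, e₁])ᵀᵀ * (of ![e₀, e₁])ᵀ = 1 := by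
  ext i j
  change ![e₀, e₁] i ⬝ᵥ ![e₀, e₁] j = (1 : Matrix (Fin 2) (Fin 2) ℝ) i j
  fin_cases i <;> fin_cases j <;> simp [h₀₀, h₀₁, h₁₁, dotProduct_comm e₁]

lemma exists_eq_mulVec_of_eq_smul_add {ι : Type*} {e₀ e₁ v : ι → ℝ}
    (h : ∃ a b : ℝ, v = a • e₀ + b • e₁) : ∃ x, v = (of ![e₀, e₁])ᵀ *ᵥ x := by
  obtain ⟨a, b, rfl⟩ := h
  exact ⟨![a, b], by ext i; simp [mulVec, dotProduct, Fin.sum_univ_two, mul_comm]⟩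

section Restriction

lemma vecMulVec_mulVec_self {l : Type*} (U : Matrix l n ℝ) (x : n → ℝ) :
    vecMulVec (U *ᵥ x) (U *ᵥ x) = U * vecMulVec x x * Uᵀ := by
  rw [mul_vecMulVec, vecMulVec_mul, vecMul_transpose]

lemma mulVec_dotProduct_mulVec (U : Matrix n m ℝ) (A : Matrix n n ℝ) (x y : m → ℝ) :
    U *ᵥ x ⬝ᵥ (A *ᵥ (U *ᵥ y)) = x ⬝ᵥ ((Uᵀ * A * U) *ᵥ y) := by
  rw [dotProduct_comm, dotProduct_mulVec, dotProduct_comm, ← mulVec_transpose, mulVec_mulVec,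
    mulVec_mulVec, Matrix.mul_assoc]

variable [DecidableEq m] {U : Matrix n m ℝ}

lemma mulVec_dotProduct_mulVec_of_transpose_mul_self (hU : Uᵀ * U = 1) (x y : m → ℝ) :
    U *ᵥ x ⬝ᵥ U *ᵥ y = x ⬝ᵥ y := by
  rw [dotProduct_mulVec, ← mulVec_transpose, mulVec_mulVec, hU, one_mulVec]

lemma ellipsoidUpdate_mul_of_mul_eq {P : Matrix n n ℝ} {S : Matrix m m ℝ} (hPU : P * U = U * S)
    (hU : Uᵀ * U = 1) (c β : ℝ) (h : m → ℝ) :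
    ellipsoidUpdate c β P (U *ᵥ h) * U = U * ellipsoidUpdate c β S h := by
  have key : P * (U * vecMulVec h h * Uᵀ) * P * U = U * (S * vecMulVec h h * S) :=
    calc P * (U * vecMulVec h h * Uᵀ) * P * U
        = (P * U) * vecMulVec h h * (Uᵀ * (P * U)) := by simp only [Matrix.mul_assoc]
      _ = U * (S * vecMulVec h h * S) := by
        rw [hPU, ← Matrix.mul_assoc Uᵀ, hU, Matrix.one_mul]; simp only [Matrix.mul_assoc]
  simp only [ellipsoidUpdate, vecMulVec_mulVec_self, Matrix.smul_mul, Matrix.mul_smul,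
    Matrix.sub_mul, Matrix.mul_sub, key, hPU]

lemma mulVec_eq_smul_of_mul_eq {A : Matrix n n ℝ} {B : Matrix m m ℝ} (hAU : A * U = U * B)
    (hU : Uᵀ * U = 1) {w : m → ℝ} {p : ℝ} (h : A *ᵥ (U *ᵥ w) = p • (U *ᵥ w)) :
    B *ᵥ w = p • w := by
  have := congrArg (Uᵀ *ᵥ ·) h
  rwa [mulVec_mulVec, mulVec_mulVec, Matrix.mul_assoc, hAU, ← Matrix.mul_assoc, hU,
    Matrix.one_mul, mulVec_smul, mulVec_mulVec, hU, one_mulVec] at this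

end Restriction

section TwoByTwo

variable {M : Matrix (Fin 2) (Fin 2) ℝ} {w₁ w₂ : Fin 2 → ℝ} {p₁ p₂ : ℝ}

lemma det_of_orthogonal_ne_zero (hw₁ : w₁ ≠ 0) (hw₂ : w₂ ≠ 0) (hw : w₁ ⬝ᵥ w₂ = 0) :
    (of ![w₁, w₂]).det ≠ 0 := by
  have lagrange : (of ![w₁, w₂]).det ^ 2 = (w₁ ⬝ᵥ w₁) * (w₂ ⬝ᵥ w₂) - (w₁ ⬝ᵥ w₂) ^ 2 := by
    simp only [det_fin_two, dotProduct, Fin.sum_univ_two, of_apply, cons_val_zero, cons_val_one]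
    ring
  intro h
  rw [h, hw] at lagrange
  nlinarith [mul_pos (dotProduct_self_pos hw₁) (dotProduct_self_pos hw₂)]

lemma det_eq_mul_of_eigenvectors (h₁ : M *ᵥ w₁ = p₁ • w₁) (h₂ : M *ᵥ w₂ = p₂ • w₂)
    (hw₁ : w₁ ≠ 0) (hw₂ : w₂ ≠ 0) (hw : w₁ ⬝ᵥ w₂ = 0) : M.det = p₁ * p₂ := by
  have := congrArg det (mul_transpose_of_eigenvectors h₁ h₂)
  rw [det_mul, det_mul, det_transpose, mul_comm, det_diagonal, Fin.prod_univ_two] at this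
  simpa [det_of_orthogonal_ne_zero hw₁ hw₂ hw] using this

lemma trace_eq_add_of_eigenvectors (h₁ : M *ᵥ w₁ = p₁ • w₁) (h₂ : M *ᵥ w₂ = p₂ • w₂)
    (hw₁ : w₁ ≠ 0) (hw₂ : w₂ ≠ 0) (hw : w₁ ⬝ᵥ w₂ = 0) : M.trace = p₁ + p₂ := by
  set V := (of ![w₁, w₂])ᵀ
  have hV : IsUnit V.det := by
    simpa [V, det_transpose] using det_of_orthogonal_ne_zero hw₁ hw₂ hw
  have hM : M = V * diagonal ![p₁, p₂] * V⁻¹ := by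
    rw [← mul_transpose_of_eigenvectors h₁ h₂, Matrix.mul_assoc, mul_nonsing_inv _ hV, mul_one]
  rw [hM, trace_mul_cycle, nonsing_inv_mul _ hV, one_mul, trace_diagonal, Fin.sum_univ_two]
  rfl

lemma diag_mem_Icc_of_eigenvectors (hM : Mᵀ = M) (h₁ : M *ᵥ w₁ = p₁ • w₁)
    (h₂ : M *ᵥ w₂ = p₂ • w₂) (hw₁ : w₁ ≠ 0) (hw₂ : w₂ ≠ 0) (hw : w₁ ⬝ᵥ w₂ = 0) (hp : p₂ ≤ p₁)
    (i : Fin 2) : p₂ ≤ M i i ∧ M i i ≤ p₁ := by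
  have hdet := det_eq_mul_of_eigenvectors h₁ h₂ hw₁ hw₂ hw
  have htr := trace_eq_add_of_eigenvectors h₁ h₂ hw₁ hw₂ hw
  have hsymm : M 1 0 = M 0 1 := congrFun (congrFun hM 0) 1
  rw [det_fin_two, hsymm] at hdet
  rw [trace_fin_two] at htr
  have key : (M i i - p₁) * (M i i - p₂) = -M 0 1 ^ 2 := by
    fin_cases i <;> simp only [Fin.zero_eta, Fin.mk_one]
    · linear_combination M 0 0 * htr - hdet
    · linear_combination M 1 1 * htr - hdet
  constructor <;> nlinarith [sq_nonneg (M 0 1)]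

end TwoByTwo

section DiagonalTwo

variable {c β s₁ s₂ : ℝ} {h : Fin 2 → ℝ}

lemma dotProduct_diagonal_two_mulVec (s₁ s₂ : ℝ) (x : Fin 2 → ℝ) :
    x ⬝ᵥ (diagonal ![s₁, s₂] *ᵥ x) = s₁ * x 0 ^ 2 + s₂ * x 1 ^ 2 := by
  simp only [dotProduct, Fin.sum_univ_two, mulVec_diagonal, cons_val_zero, cons_val_one]
  ring

lemma det_ellipsoidUpdate_diagonal_two (hh : s₁ * h 0 ^ 2 + s₂ * h 1 ^ 2 = 1) :
    (ellipsoidUpdate c β (diagonal ![s₁, s₂]) h).det = c ^ 2 * (1 - β) * s₁ * s₂ := by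
  simp only [det_fin_two, ellipsoidUpdate_diagonal_apply, diagonal_apply_eq, diagonal_apply_ne,
    cons_val_zero, cons_val_one, ne_eq, zero_ne_one, one_ne_zero, not_false_eq_true]
  linear_combination (-(c ^ 2 * s₁ * s₂ * β)) * hh

lemma dotProduct_ellipsoidUpdate_diagonal_two_mulVec (x : Fin 2 → ℝ) :
    x ⬝ᵥ (ellipsoidUpdate c β (diagonal ![s₁, s₂]) h *ᵥ x)
      = c * (s₁ * x 0 ^ 2 + s₂ * x 1 ^ 2 - β * (s₁ * h 0 * x 0 + s₂ * h 1 * x 1) ^ 2) := by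
  simp only [dotProduct, mulVec, Fin.sum_univ_two, ellipsoidUpdate_diagonal_apply,
    diagonal_apply_eq, diagonal_apply_ne, cons_val_zero, cons_val_one, ne_eq, zero_ne_one,
    one_ne_zero, not_false_eq_true]
  ring

lemma dotProduct_ellipsoidUpdate_diagonal_two_mulVec_le (hc : 0 ≤ c) (hβ : 0 ≤ β)
    (hs : s₂ ≤ s₁) (x : Fin 2 → ℝ) :
    x ⬝ᵥ (ellipsoidUpdate c β (diagonal ![s₁, s₂]) h *ᵥ x) ≤ c * s₁ * (x ⬝ᵥ x) := by
  rw [dotProduct_ellipsoidUpdate_diagonal_two_mulVec]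
  simp only [dotProduct, Fin.sum_univ_two]
  have : s₂ * x 1 ^ 2 ≤ s₁ * x 1 ^ 2 := by gcongr
  nlinarith [mul_nonneg hβ (sq_nonneg (s₁ * h 0 * x 0 + s₂ * h 1 * x 1))]

lemma le_dotProduct_ellipsoidUpdate_diagonal_two_mulVec (hc : 0 ≤ c) (hβ₀ : 0 ≤ β)
    (hβ₁ : β ≤ 1) (hs₂ : 0 ≤ s₂) (hs : s₂ ≤ s₁) (hh : s₁ * h 0 ^ 2 + s₂ * h 1 ^ 2 = 1)
    (x : Fin 2 → ℝ) :
    c * (1 - β) * s₂ * (x ⬝ᵥ x) ≤ x ⬝ᵥ (ellipsoidUpdate c β (diagonal ![s₁, s₂]) h *ᵥ x) := by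
  rw [dotProduct_ellipsoidUpdate_diagonal_two_mulVec]
  simp only [dotProduct, Fin.sum_univ_two]
  set A := s₁ * x 0 ^ 2 + s₂ * x 1 ^ 2
  have cauchySchwarz : (s₁ * h 0 * x 0 + s₂ * h 1 * x 1) ^ 2 ≤ A := by
    have : A - (s₁ * h 0 * x 0 + s₂ * h 1 * x 1) ^ 2 = s₁ * s₂ * (h 0 * x 1 - h 1 * x 0) ^ 2 := by
      linear_combination (-A) * hh
    nlinarith [mul_nonneg (mul_nonneg (hs₂.trans hs) hs₂) (sq_nonneg (h 0 * x 1 - h 1 * x 0))]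
  have hA : s₂ * (x 0 * x 0 + x 1 * x 1) ≤ A := by nlinarith [sq_nonneg (x 0)]
  have hc' : 0 ≤ c * (1 - β) := mul_nonneg hc (by linarith)
  calc c * (1 - β) * s₂ * (x 0 * x 0 + x 1 * x 1) ≤ c * (1 - β) * A := by
        rw [mul_assoc]; gcongr
    _ ≤ c * (A - β * (s₁ * h 0 * x 0 + s₂ * h 1 * x 1) ^ 2) := by
        nlinarith [mul_le_mul_of_nonneg_left cauchySchwarz (mul_nonneg hc hβ₀)]

theorem eigenvalues_ellipsoidUpdate_diagonal_two {p₁ p₂ : ℝ} {w₁ w₂ : Fin 2 → ℝ}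
    (hc : 0 ≤ c) (hβ₀ : 0 ≤ β) (hβ₁ : β ≤ 1) (hs₂ : 0 ≤ s₂) (hs : s₂ ≤ s₁)
    (hh : s₁ * h 0 ^ 2 + s₂ * h 1 ^ 2 = 1)
    (h₁ : ellipsoidUpdate c β (diagonal ![s₁, s₂]) h *ᵥ w₁ = p₁ • w₁)
    (h₂ : ellipsoidUpdate c β (diagonal ![s₁, s₂]) h *ᵥ w₂ = p₂ • w₂)
    (hw₁ : w₁ ≠ 0) (hw₂ : w₂ ≠ 0) (hw : w₁ ⬝ᵥ w₂ = 0) (hp : p₂ ≤ p₁) :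
    p₁ * p₂ = c ^ 2 * (1 - β) * s₁ * s₂ ∧ c * (1 - β) * s₁ ≤ p₁ ∧ p₁ ≤ c * s₁ ∧
      c * (1 - β) * s₂ ≤ p₂ ∧ p₂ ≤ c * s₂ := by
  set M := ellipsoidUpdate c β (diagonal ![s₁, s₂]) h
  have hdiag := diag_mem_Icc_of_eigenvectors
    (transpose_ellipsoidUpdate (diagonal_transpose _) c β h) h₁ h₂ hw₁ hw₂ hw hp
  have hM₀₀ : c * (1 - β) * s₁ ≤ M 0 0 := by
    simp only [M, ellipsoidUpdate_diagonal_apply, diagonal_apply_eq, cons_val_zero]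
    have : c * (s₁ - β * (s₁ * h 0) * (s₁ * h 0)) - c * (1 - β) * s₁
        = c * β * s₁ * s₂ * h 1 ^ 2 := by
      linear_combination (-(c * β * s₁)) * hh
    nlinarith [show 0 ≤ c * β * s₁ * s₂ * h 1 ^ 2 by have := hs₂.trans hs; positivity]
  have hM₁₁ : M 1 1 ≤ c * s₂ := by
    simp only [M, ellipsoidUpdate_diagonal_apply, diagonal_apply_eq, cons_val_one, cons_val_zero]
    nlinarith [show 0 ≤ c * β * (s₂ * h 1) ^ 2 by positivity]
  exact ⟨(det_eq_mul_of_eigenvectors h₁ h₂ hw₁ hw₂ hw).symm.trans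
      (det_ellipsoidUpdate_diagonal_two hh),
    hM₀₀.trans (hdiag 0).2,
    eigenvalue_le_of_dotProduct_mulVec_le h₁ hw₁
      (dotProduct_ellipsoidUpdate_diagonal_two_mulVec_le hc hβ₀ hs w₁),
    le_eigenvalue_of_le_dotProduct_mulVec h₂ hw₂
      (le_dotProduct_ellipsoidUpdate_diagonal_two_mulVec hc hβ₀ hβ₁ hs₂ hs hh w₂),
    (hdiag 1).1.trans hM₁₁⟩

end DiagonalTwo

theorem eigenvalues_ellipsoidUpdate_of_mul_eq {U : Matrix n (Fin 2) ℝ} {P : Matrix n n ℝ}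
    {c β s₁ s₂ p₁ p₂ : ℝ} {x w₁ w₂ : Fin 2 → ℝ} (hU : Uᵀ * U = 1)
    (hPU : P * U = U * diagonal ![s₁, s₂]) (hc : 0 ≤ c) (hβ₀ : 0 ≤ β) (hβ₁ : β ≤ 1)
    (hs₂ : 0 < s₂) (hs : s₂ ≤ s₁) (hx : U *ᵥ x ≠ 0)
    (h₁ : ellipsoidUpdate c β P ((√(U *ᵥ x ⬝ᵥ (P *ᵥ (U *ᵥ x))))⁻¹ • U *ᵥ x) *ᵥ (U *ᵥ w₁)
      = p₁ • U *ᵥ w₁)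
    (h₂ : ellipsoidUpdate c β P ((√(U *ᵥ x ⬝ᵥ (P *ᵥ (U *ᵥ x))))⁻¹ • U *ᵥ x) *ᵥ (U *ᵥ w₂)
      = p₂ • U *ᵥ w₂)
    (hw₁ : U *ᵥ w₁ ≠ 0) (hw₂ : U *ᵥ w₂ ≠ 0) (hw : U *ᵥ w₁ ⬝ᵥ U *ᵥ w₂ = 0) (hp : p₂ ≤ p₁) :
    p₁ * p₂ = c ^ 2 * (1 - β) * s₁ * s₂ ∧ c * (1 - β) * s₁ ≤ p₁ ∧ p₁ ≤ c * s₁ ∧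
      c * (1 - β) * s₂ ≤ p₂ ∧ p₂ ≤ c * s₂ := by
  have hUPU : Uᵀ * P * U = diagonal ![s₁, s₂] := by
    rw [Matrix.mul_assoc, hPU, ← Matrix.mul_assoc, hU, Matrix.one_mul]
  have hxPx : 0 < U *ᵥ x ⬝ᵥ (P *ᵥ (U *ᵥ x)) := by
    have hS : (diagonal ![s₁, s₂]).PosDef :=
      PosDef.diagonal fun k => by fin_cases k <;> simp [hs₂, hs₂.trans_le hs]
    rw [mulVec_dotProduct_mulVec, hUPU]
    simpa using hS.dotProduct_mulVec_pos (x := x) (by rintro rfl; simp at hx)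
  set h := (√(U *ᵥ x ⬝ᵥ (P *ᵥ (U *ᵥ x))))⁻¹ • x
  have hh : s₁ * h 0 ^ 2 + s₂ * h 1 ^ 2 = 1 := by
    rw [← dotProduct_diagonal_two_mulVec, ← hUPU, ← mulVec_dotProduct_mulVec, mulVec_smul]
    exact normalize_dotProduct_mulVec hxPx
  have hM := ellipsoidUpdate_mul_of_mul_eq hPU hU c β h
  rw [mulVec_smul] at hM
  exact eigenvalues_ellipsoidUpdate_diagonal_two hc hβ₀ hβ₁ hs₂.le hs hh
    (mulVec_eq_smul_of_mul_eq hM hU h₁) (mulVec_eq_smul_of_mul_eq hM hU h₂)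
    (by rintro rfl; exact hw₁ (mulVec_zero _)) (by rintro rfl; exact hw₂ (mulVec_zero _))
    (by rwa [mulVec_dotProduct_mulVec_of_transpose_mul_self hU] at hw) hp

lemma centralCut_coeff_mul_one_sub {x : ℝ} (hx : 1 < x) :
    x ^ 2 / (x ^ 2 - 1) * (1 - 2 / (x + 1)) = x ^ 2 / (x + 1) ^ 2 := by
  have hx₁ : x - 1 ≠ 0 := by linarith
  have hx₂ : x + 1 ≠ 0 := by linarith
  rw [show x ^ 2 - 1 = (x - 1) * (x + 1) by ring]
  field_simp
  ring

lemma centralCut_coeff_sq_mul_one_sub {x : ℝ} (hx : 1 < x) :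
    (x ^ 2 / (x ^ 2 - 1)) ^ 2 * (1 - 2 / (x + 1)) = x ^ 4 / ((x + 1) ^ 3 * (x - 1)) := by
  have hx₁ : x - 1 ≠ 0 := by linarith
  have hx₂ : x + 1 ≠ 0 := by linarith
  rw [show x ^ 2 - 1 = (x - 1) * (x + 1) by ring]
  field_simp
  ring

lemma centralCut_volumeRatio_lt_one {x : ℝ} (hx : 2 ≤ x) :
    x ^ 4 / ((x + 1) ^ 3 * (x - 1)) < 1 := by
  rw [div_lt_one (mul_pos (by positivity) (by linarith))]
  nlinarith [mul_nonneg (mul_nonneg (by linarith : (0 : ℝ) ≤ x) (by linarith : (0 : ℝ) ≤ x))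
    (by linarith : (0 : ℝ) ≤ x - 2)]

/-- The two remaining eigenvalues `σ'₁ ≥ σ'₂` of the central-cut update `P'`
(those with eigenvectors in `span{u 0, u 1}`) satisfy the stated product
identity and bounds. -/
theorem stmt4 (d : ℕ) (hd : 2 ≤ d)
    (P : Matrix (Fin d) (Fin d) ℝ)
    (σ : Fin d → ℝ) (u : Fin d → Fin d → ℝ)
    (horth : ∀ i j, u i ⬝ᵥ u j = if i = j then (1 : ℝ) else 0)
    (hdecr : ∀ i j : Fin d, i ≤ j → σ j ≤ σ i)
    (hpos : ∀ i, 0 < σ i)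
    (hP : P = ∑ i, σ i • vecMulVec (u i) (u i))
    (g : Fin d → ℝ) (hg : g ≠ 0)
    (hspan : ∃ a b : ℝ, g = a • u ⟨0, by omega⟩ + b • u ⟨1, by omega⟩)
    (gt : Fin d → ℝ) (hgt : gt = (Real.sqrt (g ⬝ᵥ (P *ᵥ g)))⁻¹ • g)
    (P' : Matrix (Fin d) (Fin d) ℝ)
    (hP' : P' = ((d : ℝ)^2 / ((d : ℝ)^2 - 1)) •
      (P - (2 / ((d : ℝ) + 1)) • (P * vecMulVec gt gt * P)))
    (σ'₁ σ'₂ : ℝ) (v₁ v₂ : Fin d → ℝ)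
    (hv₁ : v₁ ≠ 0) (hv₂ : v₂ ≠ 0)
    (hv₁span : ∃ a b : ℝ, v₁ = a • u ⟨0, by omega⟩ + b • u ⟨1, by omega⟩)
    (hv₂span : ∃ a b : ℝ, v₂ = a • u ⟨0, by omega⟩ + b • u ⟨1, by omega⟩)
    (hvorth : v₁ ⬝ᵥ v₂ = 0)
    (heig₁ : P' *ᵥ v₁ = σ'₁ • v₁) (heig₂ : P' *ᵥ v₂ = σ'₂ • v₂)
    (hord : σ'₂ ≤ σ'₁) :
    σ'₁ * σ'₂ / (σ ⟨0, by omega⟩ * σ ⟨1, by omega⟩)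
        = (d : ℝ)^4 / (((d : ℝ) + 1)^3 * ((d : ℝ) - 1)) ∧
    (d : ℝ)^4 / (((d : ℝ) + 1)^3 * ((d : ℝ) - 1)) < 1 ∧
    ((d : ℝ)^2 / ((d : ℝ) + 1)^2) * σ ⟨0, by omega⟩ ≤ σ'₁ ∧
    σ'₁ ≤ ((d : ℝ)^2 / ((d : ℝ)^2 - 1)) * σ ⟨0, by omega⟩ ∧
    ((d : ℝ)^2 / ((d : ℝ) + 1)^2) * σ ⟨1, by omega⟩ ≤ σ'₂ ∧
    σ'₂ ≤ ((d : ℝ)^2 / ((d : ℝ)^2 - 1)) * σ ⟨1, by omega⟩ := by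
  obtain ⟨x, rfl⟩ := exists_eq_mulVec_of_eq_smul_add hspan
  obtain ⟨w₁, rfl⟩ := exists_eq_mulVec_of_eq_smul_add hv₁span
  obtain ⟨w₂, rfl⟩ := exists_eq_mulVec_of_eq_smul_add hv₂span
  set i₀ : Fin d := ⟨0, by omega⟩
  set i₁ : Fin d := ⟨1, by omega⟩
  have hi : i₀ ≠ i₁ := by simp [i₀, i₁, Fin.ext_iff]
  have hU := transpose_mul_self_of_orthonormal (e₀ := u i₀) (e₁ := u i₁) (by simp [horth])
    (by simp [horth, hi]) (by simp [horth])
  have hPU := hP ▸ mul_transpose_of_eigenvectors (mulVec_eq_smul_of_orthonormal horth σ i₀)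
    (mulVec_eq_smul_of_orthonormal horth σ i₁)
  have hd' : (2 : ℝ) ≤ d := by exact_mod_cast hd
  subst hP' hgt
  obtain ⟨hprod, h₁lo, h₁hi, h₂lo, h₂hi⟩ := eigenvalues_ellipsoidUpdate_of_mul_eq hU hPU
    (div_nonneg (by positivity) (by nlinarith)) (by positivity)
    (by rw [div_le_one (by positivity)]; linarith) (hpos i₁)
    (hdecr i₀ i₁ (by simp [i₀, i₁, Fin.le_def])) hg heig₁ heig₂ hv₁ hv₂ hvorth hord
  rw [centralCut_coeff_mul_one_sub (by linarith)] at h₁lo h₂lo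
  rw [centralCut_coeff_sq_mul_one_sub (by linarith)] at hprod
  refine ⟨?_, centralCut_volumeRatio_lt_one hd', h₁lo, h₁hi, h₂lo, h₂hi⟩
  rw [hprod, div_eq_iff (mul_pos (hpos i₀) (hpos i₁)).ne']
  ring
end

section
/- Let d ≥ 2, let P be a d×d symmetric positive definite matrix with eigen-decomposition P = Σ_{i=1}^d σ_i u_i u_iᵀ (σ_1 ≥ ⋯ ≥ σ_d > 0, u_i orthonormal), let x ∈ ℝ^d, and suppose both θ_* ∈ ℝ^d and the origin 0 belong to the ellipsoid E(x,P) = {z : (z−x)ᵀP⁻¹(z−x) ≤ 1}. Then Σ_{i=2}^d ⟨u_i, θ_*⟩² ≤ 4 Σ_{i=2}^d σ_i. -/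
open Matrix

lemma vecMulVec_mulVec' {d : ℕ} (a b z : Fin d → ℝ) :
    vecMulVec a b *ᵥ z = (b ⬝ᵥ z) • a := by
  ext i
  simp only [mulVec, dotProduct, vecMulVec_apply, Pi.smul_apply, smul_eq_mul,
    Finset.sum_mul, Finset.mul_sum]
  exact Finset.sum_congr rfl fun k _ => by ring

lemma sum_mulVec' {d : ℕ} {ι : Type*} (s : Finset ι) (A : ι → Matrix (Fin d) (Fin d) ℝ)
    (z : Fin d → ℝ) : (∑ i ∈ s, A i) *ᵥ z = ∑ i ∈ s, A i *ᵥ z := by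
  ext j
  simp only [mulVec, dotProduct, Finset.sum_apply, Matrix.sum_apply, Finset.sum_mul]
  exact Finset.sum_comm

lemma dotProduct_sum' {d : ℕ} {ι : Type*} (s : Finset ι) (z : Fin d → ℝ) (v : ι → Fin d → ℝ) :
    z ⬝ᵥ (∑ i ∈ s, v i) = ∑ i ∈ s, z ⬝ᵥ v i := by
  simp only [dotProduct, Finset.sum_apply, Finset.mul_sum]
  exact Finset.sum_comm

/-- If both `θ_*` and the origin lie in the ellipsoid `E(x, P)`, then the
components of `θ_*` along the non-leading eigenvectors are controlled by the
corresponding eigenvalues: `∑_{i≥2} ⟨u i, θ_*⟩² ≤ 4 ∑_{i≥2} σ i`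
(0-based: indices `i ≥ 1`). -/
theorem stmt8 (d : ℕ) (hd : 2 ≤ d)
    (P : Matrix (Fin d) (Fin d) ℝ)
    (σ : Fin d → ℝ) (u : Fin d → Fin d → ℝ)
    (horth : ∀ i j, u i ⬝ᵥ u j = if i = j then (1 : ℝ) else 0)
    (hdecr : ∀ i j : Fin d, i ≤ j → σ j ≤ σ i)
    (hpos : ∀ i, 0 < σ i)
    (hP : P = ∑ i, σ i • vecMulVec (u i) (u i))
    (x θstar : Fin d → ℝ)
    (hθ : (θstar - x) ⬝ᵥ (P⁻¹ *ᵥ (θstar - x)) ≤ 1)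
    (h0 : ((0 : Fin d → ℝ) - x) ⬝ᵥ (P⁻¹ *ᵥ ((0 : Fin d → ℝ) - x)) ≤ 1) :
    ∑ i ∈ Finset.univ.filter (fun i : Fin d => 1 ≤ (i : ℕ)), (u i ⬝ᵥ θstar) ^ 2
      ≤ 4 * ∑ i ∈ Finset.univ.filter (fun i : Fin d => 1 ≤ (i : ℕ)), σ i := by
  classical
  set Q : Matrix (Fin d) (Fin d) ℝ := ∑ i, (σ i)⁻¹ • vecMulVec (u i) (u i) with hQ
  -- ∑ uᵢuᵢᵀ = 1
  have hsum1 : (∑ i, vecMulVec (u i) (u i)) = (1 : Matrix (Fin d) (Fin d) ℝ) := by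
    have h1 : (Matrix.of u) * (Matrix.of u)ᵀ = 1 := by
      ext i j
      simpa [Matrix.mul_apply, Matrix.one_apply, dotProduct] using horth i j
    have h2 : (Matrix.of u)ᵀ * (Matrix.of u) = 1 := mul_eq_one_comm.mp h1
    ext i j
    have := congrFun (congrFun h2 i) j
    simp only [Matrix.mul_apply, Matrix.transpose_apply, Matrix.of_apply] at this
    simp only [Matrix.sum_apply, vecMulVec_apply]
    simpa [mul_comm] using this
  -- P * Q = 1
  have hPQ : P * Q = 1 := by
    rw [hP, hQ, Finset.sum_mul]
    have : ∀ i : Fin d, (σ i • vecMulVec (u i) (u i)) * (∑ j, (σ j)⁻¹ • vecMulVec (u j) (u j))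
        = vecMulVec (u i) (u i) := by
      intro i
      rw [Finset.mul_sum]
      have hterm : ∀ j : Fin d, (σ i • vecMulVec (u i) (u i)) * ((σ j)⁻¹ • vecMulVec (u j) (u j))
          = if i = j then vecMulVec (u i) (u i) else 0 := by
        intro j
        have hmm : vecMulVec (u i) (u i) * vecMulVec (u j) (u j)
            = (u i ⬝ᵥ u j) • vecMulVec (u i) (u j) := by
          ext a b
          simp [Matrix.mul_apply, vecMulVec_apply, dotProduct, Finset.sum_mul,
            Finset.mul_sum]
          apply Finset.sum_congr rfl
          intro k _
          ring
        rw [Matrix.smul_mul, Matrix.mul_smul, hmm, horth i j]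
        by_cases h : i = j
        · subst h
          simp [smul_smul, mul_inv_cancel₀ (hpos i).ne']
        · simp [h]
      rw [Finset.sum_congr rfl fun j _ => hterm j]
      simp
    rw [Finset.sum_congr rfl fun i _ => this i, hsum1]
  have hPinv : P⁻¹ = Q := Matrix.inv_eq_right_inv hPQ
  -- quadratic form
  have hquad : ∀ z : Fin d → ℝ, z ⬝ᵥ (Q *ᵥ z) = ∑ i, (σ i)⁻¹ * (u i ⬝ᵥ z) ^ 2 := by
    intro z
    rw [hQ]
    rw [sum_mulVec']
    rw [dotProduct_sum']
    apply Finset.sum_congr rfl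
    intro i _
    rw [Matrix.smul_mulVec, vecMulVec_mulVec']
    rw [dotProduct_smul, dotProduct_smul]
    rw [dotProduct_comm z (u i)]
    simp [smul_eq_mul, sq]
  -- per-coordinate bounds
  have hbound : ∀ z : Fin d → ℝ, z ⬝ᵥ (Q *ᵥ z) ≤ 1 → ∀ i, (u i ⬝ᵥ z) ^ 2 ≤ σ i := by
    intro z hz i
    rw [hquad z] at hz
    have hterm : (σ i)⁻¹ * (u i ⬝ᵥ z) ^ 2 ≤ 1 := by
      refine le_trans (Finset.single_le_sum (f := fun j => (σ j)⁻¹ * (u j ⬝ᵥ z) ^ 2)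
        (fun j _ => mul_nonneg (inv_nonneg.mpr (hpos j).le) (sq_nonneg _)) (Finset.mem_univ i)) hz
    have := (inv_mul_le_iff₀ (hpos i)).mp hterm
    simpa using this
  rw [hPinv] at hθ h0
  have hb1 := hbound _ hθ
  have hb2 := hbound _ h0
  -- combine
  rw [Finset.mul_sum]
  apply Finset.sum_le_sum
  intro i _
  have e1 : u i ⬝ᵥ θstar = (u i ⬝ᵥ (θstar - x)) - (u i ⬝ᵥ ((0 : Fin d → ℝ) - x)) := by
    simp [dotProduct_sub]
  have h1 := hb1 i
  have h2 := hb2 i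
  calc (u i ⬝ᵥ θstar) ^ 2
      = ((u i ⬝ᵥ (θstar - x)) - (u i ⬝ᵥ ((0 : Fin d → ℝ) - x))) ^ 2 := by rw [e1]
    _ ≤ 2 * (u i ⬝ᵥ (θstar - x)) ^ 2 + 2 * (u i ⬝ᵥ ((0 : Fin d → ℝ) - x)) ^ 2 := by nlinarith [sq_nonneg ((u i ⬝ᵥ (θstar - x)) + (u i ⬝ᵥ ((0 : Fin d → ℝ) - x)))]
    _ ≤ 2 * σ i + 2 * σ i := by linarith
    _ = 4 * σ i := by ring
end
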